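/- arXiv:2310.20439 — 3 statements merged into one kernel-verified Lean document; each statement's English description precedes it below -/
import Mathlib

section
/- Let r ≥ 3 be a natural number, and let β, γ, κ, α be multi-indices with |γ| = 2, |κ| = 1, 0 < |β| ≤ |α|/2, and |α| ≥ r. Then the quantity a_l := (|α|^r / (|β|! · |α−β|!)) · ((|β|! · |β+γ|!) / (|β|^r · |β+γ|^r))^{1/2} · (|α−β+κ|! / |α−β+κ|^{r+1}) is bounded above by a constant depending only on r. -/
lemma natsq (r B : ℕ) (hr : 3 ≤ r) (hB : 1 ≤ B) :
    Nat.factorial B * Nat.factorial (B+2) * (B^(r-1))^2 ≤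
      (3 * Nat.factorial B)^2 * (B^r * (B+2)^r) := by
  obtain ⟨s, rfl⟩ := Nat.exists_eq_add_of_le hr
  have h1 : Nat.factorial (B+2) = (B+2) * ((B+1) * Nat.factorial B) := rfl
  have key : (B+1) * (B+2) * B^(s+1) ≤ (B+2)^(s+3) := by
    calc (B+1) * (B+2) * B^(s+1) ≤ (B+2) * (B+2) * (B+2)^(s+1) := by
          gcongr <;> omega
      _ = (B+2)^(s+3) := by ring
  calc Nat.factorial B * Nat.factorial (B+2) * (B^(3+s-1))^2
      = (Nat.factorial B)^2 * ((B+1)*(B+2) * B^(s+1)) * B^(s+3) := by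
        rw [h1]; have : 3 + s - 1 = s + 2 := by omega
        rw [this]; ring
    _ ≤ (Nat.factorial B)^2 * (B+2)^(s+3) * B^(s+3) := by gcongr
    _ ≤ (3 * Nat.factorial B)^2 * (B^(3+s) * (B+2)^(3+s)) := by
        have h3s : 3 + s = s + 3 := by omega
        rw [h3s]; nlinarith [Nat.zero_le ((Nat.factorial B)^2 * (B+2)^(s+3) * B^(s+3))]

lemma natpow (r B m : ℕ) (hB : 1 ≤ B) (hBm : B ≤ m) :
    (B + m)^r ≤ 2^r * (B^(r-1) * (m+1)^r) := by
  have h1 : (B + m)^r ≤ (2*(m+1))^r := Nat.pow_le_pow_left (by omega) r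
  have h2 : 1 ≤ B^(r-1) := Nat.one_le_pow _ _ hB
  calc (B + m)^r ≤ (2*(m+1))^r := h1
    _ = 2^r * (m+1)^r := by rw [mul_pow]
    _ ≤ 2^r * (B^(r-1) * (m+1)^r) := by nlinarith [Nat.zero_le (2^r * (m+1)^r)]

lemma core (r B m : ℕ) (hr : 3 ≤ r) (hB : 1 ≤ B) (hBm : B ≤ m) :
    ((B + m : ℕ) : ℝ) ^ r / ((Nat.factorial B : ℝ) * (Nat.factorial m : ℝ)) *
      Real.sqrt (((Nat.factorial B : ℝ) * (Nat.factorial (B+2) : ℝ)) /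
        (((B : ℕ) : ℝ)^r * ((B+2 : ℕ) : ℝ)^r)) *
      ((Nat.factorial (m+1) : ℝ) / ((m+1 : ℕ) : ℝ)^(r+1)) ≤ 3 * 2^r := by
  have hBpos : (0:ℝ) < (B:ℝ) := by exact_mod_cast hB
  have hfB : (0:ℝ) < (Nat.factorial B : ℝ) := by exact_mod_cast B.factorial_pos
  have hfm : (0:ℝ) < (Nat.factorial m : ℝ) := by exact_mod_cast m.factorial_pos
  have hS : Real.sqrt (((Nat.factorial B : ℝ) * (Nat.factorial (B+2) : ℝ)) /
        (((B : ℕ) : ℝ)^r * ((B+2 : ℕ) : ℝ)^r)) ≤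
      3 * (Nat.factorial B : ℝ) / ((B:ℝ)^(r-1)) := by
    rw [show (3 * (Nat.factorial B : ℝ) / ((B:ℝ)^(r-1)))
        = Real.sqrt ((3 * (Nat.factorial B : ℝ) / ((B:ℝ)^(r-1)))^2) from
      (Real.sqrt_sq (by positivity)).symm]
    apply Real.sqrt_le_sqrt
    rw [div_pow, div_le_div_iff₀ (by positivity) (by positivity)]
    push_cast
    calc (Nat.factorial B : ℝ) * (Nat.factorial (B+2) : ℝ) * (((B:ℝ))^(r-1))^2
        = ((Nat.factorial B * Nat.factorial (B+2) * (B^(r-1))^2 : ℕ) : ℝ) := by push_cast; ring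
      _ ≤ (((3 * Nat.factorial B)^2 * (B^r * (B+2)^r) : ℕ) : ℝ) := by
          exact_mod_cast natsq r B hr hB
      _ = (3 * (Nat.factorial B : ℝ))^2 * (((B:ℝ))^r * ((B:ℝ)+2)^r) := by push_cast; ring
  have hmain : ((B + m : ℕ) : ℝ) ^ r / ((Nat.factorial B : ℝ) * (Nat.factorial m : ℝ)) *
      (3 * (Nat.factorial B : ℝ) / ((B:ℝ)^(r-1))) *
      ((Nat.factorial (m+1) : ℝ) / ((m+1 : ℕ) : ℝ)^(r+1)) ≤ 3 * 2^r := by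
    have hfm1 : (Nat.factorial (m+1) : ℝ) = ((m:ℝ)+1) * (Nat.factorial m : ℝ) := by
      rw [Nat.factorial_succ]; push_cast; ring
    have heq : ((B + m : ℕ) : ℝ) ^ r / ((Nat.factorial B : ℝ) * (Nat.factorial m : ℝ)) *
        (3 * (Nat.factorial B : ℝ) / ((B:ℝ)^(r-1))) *
        ((Nat.factorial (m+1) : ℝ) / ((m+1 : ℕ) : ℝ)^(r+1)) =
        3 * (((B + m : ℕ) : ℝ) ^ r / ((B:ℝ)^(r-1) * ((m:ℝ)+1)^r)) := by
      rw [hfm1, pow_succ]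
      push_cast
      field_simp
    rw [heq]
    have hX : ((B + m : ℕ) : ℝ)^r ≤ 2^r * ((B:ℝ)^(r-1) * ((m:ℝ)+1)^r) := by
      have := natpow r B m hB hBm
      calc ((B + m : ℕ) : ℝ) ^ r = ((((B+m))^r : ℕ) : ℝ) := by push_cast; ring
        _ ≤ ((2^r * (B^(r-1) * (m+1)^r) : ℕ) : ℝ) := by exact_mod_cast this
        _ = 2^r * ((B:ℝ)^(r-1) * ((m:ℝ)+1)^r) := by push_cast; ring
    have hdiv : ((B + m : ℕ) : ℝ)^r / ((B:ℝ)^(r-1) * ((m:ℝ)+1)^r) ≤ 2^r := by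
      rw [div_le_iff₀ (by positivity)]; linarith
    nlinarith [hdiv]
  calc ((B + m : ℕ) : ℝ) ^ r / ((Nat.factorial B : ℝ) * (Nat.factorial m : ℝ)) *
      Real.sqrt (((Nat.factorial B : ℝ) * (Nat.factorial (B+2) : ℝ)) /
        (((B : ℕ) : ℝ)^r * ((B+2 : ℕ) : ℝ)^r)) *
      ((Nat.factorial (m+1) : ℝ) / ((m+1 : ℕ) : ℝ)^(r+1))
      ≤ ((B + m : ℕ) : ℝ) ^ r / ((Nat.factorial B : ℝ) * (Nat.factorial m : ℝ)) *
      (3 * (Nat.factorial B : ℝ) / ((B:ℝ)^(r-1))) *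
      ((Nat.factorial (m+1) : ℝ) / ((m+1 : ℕ) : ℝ)^(r+1)) := by
        gcongr <;> positivity
    _ ≤ 3 * 2^r := hmain

/-- Boundedness of the "low" factorial coefficient `a_l` in the analytic
product estimate: for `r ≥ 3` and multi-indices `β ≤ α`, `|γ| = 2`, `|κ| = 1`,
`0 < |β| ≤ |α|/2`, `|α| ≥ r`, the quantity
`a_l = (|α|^r/(|β|! |α−β|!)) ((|β|! |β+γ|!)/(|β|^r |β+γ|^r))^{1/2}
       (|α−β+κ|!/|α−β+κ|^{r+1})`
is bounded by a constant depending only on `r`. -/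
theorem stmt_5 (r : ℕ) (hr : 3 ≤ r) :
    ∃ C : ℝ, 0 < C ∧ ∀ (d : ℕ) (α β γ κ : Fin d → ℕ),
      (∀ i, β i ≤ α i) →
      (∑ i, γ i) = 2 → (∑ i, κ i) = 1 →
      0 < ∑ i, β i → 2 * (∑ i, β i) ≤ ∑ i, α i → r ≤ ∑ i, α i →
      ((∑ i, α i : ℝ) ^ r /
          ((Nat.factorial (∑ i, β i) : ℝ) * (Nat.factorial (∑ i, (α i - β i)) : ℝ))) *
        Real.sqrt (((Nat.factorial (∑ i, β i) : ℝ) * (Nat.factorial (∑ i, (β i + γ i)) : ℝ)) /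
          ((∑ i, β i : ℝ) ^ r * (∑ i, (β i + γ i) : ℝ) ^ r)) *
        ((Nat.factorial (∑ i, (α i - β i + κ i)) : ℝ) /
          (∑ i, (α i - β i + κ i) : ℝ) ^ (r + 1)) ≤ C := by
  refine ⟨3 * 2^r, by positivity, ?_⟩
  intro d α β γ κ hβα hγ hκ hβ hhalf _
  set B := ∑ i, β i with hBdef
  set m := ∑ i, (α i - β i) with hmdef
  have hA : ∑ i, α i = B + m := by
    rw [hBdef, hmdef, ← Finset.sum_add_distrib]
    exact Finset.sum_congr rfl fun i _ => by have := hβα i; omega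
  have hβγ : ∑ i, (β i + γ i) = B + 2 := by
    rw [Finset.sum_add_distrib, hγ]
  have hκ' : ∑ i, (α i - β i + κ i) = m + 1 := by
    rw [Finset.sum_add_distrib, hκ]
  have hB1 : 1 ≤ B := hβ
  have hBm : B ≤ m := by omega
  have e1 : (∑ i, (α i : ℝ)) = ((B + m : ℕ) : ℝ) := by
    rw [← Nat.cast_sum, hA]
  have e2 : (∑ i, (β i : ℝ)) = ((B : ℕ) : ℝ) := by rw [← Nat.cast_sum]
  have e3 : (∑ i, ((β i : ℝ) + (γ i : ℝ))) = ((B + 2 : ℕ) : ℝ) := by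
    have : (∑ i, ((β i : ℝ) + (γ i : ℝ))) = ((∑ i, (β i + γ i) : ℕ) : ℝ) := by
      push_cast; rfl
    rw [this, hβγ]
  have e4 : (∑ i, ((α i : ℝ) - (β i : ℝ) + (κ i : ℝ))) = ((m + 1 : ℕ) : ℝ) := by
    have : (∑ i, ((α i : ℝ) - (β i : ℝ) + (κ i : ℝ)))
        = ((∑ i, (α i - β i + κ i) : ℕ) : ℝ) := by
      rw [Nat.cast_sum]
      refine Finset.sum_congr rfl fun i _ => ?_
      have := hβα i
      push_cast [Nat.cast_sub this]
      ring
    rw [this, hκ']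
  rw [e1, e2, e3, e4, hβγ, hκ']
  exact core r B m hr hB1 hBm
end

section
/- Let r ≥ 3, and let α, β, κ, γ be multi-indices with |α| ≥ r, |β| > |α|/2, β ≤ α, |κ| = 1, |γ| = 2. Then a_h := (|α|^r / (|β|! · |α−β|!)) · (|β|! / |β|^{r+1}) · ((|α−β+κ|! · |α−β+κ+γ|!) / (|α−β+κ|^r · |α−β+κ+γ|^r))^{1/2} is bounded above by a constant depending only on r. -/
set_option maxHeartbeats 1000000 in
/-- Boundedness of the "high" factorial coefficient `a_h` in the analytic
product estimate: for `r ≥ 3` and multi-indices `β ≤ α` with `|β| > |α|/2`,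
`|κ| = 1`, `|γ| = 2`, `|α| ≥ r`, the quantity
`a_h = (|α|^r/(|β|! |α−β|!)) (|β|!/|β|^{r+1})
       ((|α−β+κ|! |α−β+κ+γ|!)/(|α−β+κ|^r |α−β+κ+γ|^r))^{1/2}`
is bounded by a constant depending only on `r`. -/
theorem stmt_6 (r : ℕ) (hr : 3 ≤ r) :
    ∃ C : ℝ, 0 < C ∧ ∀ (d : ℕ) (α β γ κ : Fin d → ℕ),
      (∀ i, β i ≤ α i) →
      (∑ i, κ i) = 1 → (∑ i, γ i) = 2 →
      (∑ i, α i) < 2 * (∑ i, β i) → r ≤ ∑ i, α i →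
      ((∑ i, α i : ℝ) ^ r /
          ((Nat.factorial (∑ i, β i) : ℝ) * (Nat.factorial (∑ i, (α i - β i)) : ℝ))) *
        ((Nat.factorial (∑ i, β i) : ℝ) / (∑ i, β i : ℝ) ^ (r + 1)) *
        Real.sqrt (((Nat.factorial (∑ i, (α i - β i + κ i)) : ℝ) *
            (Nat.factorial (∑ i, (α i - β i + κ i + γ i)) : ℝ)) /
          ((∑ i, (α i - β i + κ i) : ℝ) ^ r *
            (∑ i, (α i - β i + κ i + γ i) : ℝ) ^ r)) ≤ C := by
  refine ⟨2 ^ r, by positivity, ?_⟩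
  intro d α β γ κ hβα hκ hγ hA2B hrA
  set A := ∑ i, α i with hA
  set B := ∑ i, β i with hB
  have hsub : ∑ i, (α i - β i) = A - B := by
    have h : ∑ i, (α i - β i) + B = A := by
      rw [hB, hA, ← Finset.sum_add_distrib]
      exact Finset.sum_congr rfl fun i _ => Nat.sub_add_cancel (hβα i)
    omega
  set m := A - B with hm
  have hm1 : ∑ i, (α i - β i + κ i) = m + 1 := by
    rw [Finset.sum_add_distrib, hsub, hκ]
  have hm3 : ∑ i, (α i - β i + κ i + γ i) = m + 3 := by
    rw [Finset.sum_add_distrib, hm1, hγ]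
  have hBA : B ≤ A := Finset.sum_le_sum fun i _ => hβα i
  have hκR : ∑ i, ((κ i : ℕ) : ℝ) = 1 := by rw [← Nat.cast_sum, hκ]; norm_num
  have hγR : ∑ i, ((γ i : ℕ) : ℝ) = 2 := by rw [← Nat.cast_sum, hγ]; norm_num
  have hABR : (∑ i, ((α i : ℕ) : ℝ)) - (∑ i, ((β i : ℕ) : ℝ)) = (m : ℝ) := by
    rw [← Nat.cast_sum, ← Nat.cast_sum, ← hA, ← hB, hm, Nat.cast_sub hBA]
  have hc1 : (∑ i, (((α i : ℕ) : ℝ) - ((β i : ℕ) : ℝ) + ((κ i : ℕ) : ℝ))) = ((m + 1 : ℕ) : ℝ) := by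
    rw [Finset.sum_add_distrib, Finset.sum_sub_distrib, hABR, hκR]; push_cast; ring
  have hc3 : (∑ i, (((α i : ℕ) : ℝ) - ((β i : ℕ) : ℝ) + ((κ i : ℕ) : ℝ) + ((γ i : ℕ) : ℝ)))
      = ((m + 3 : ℕ) : ℝ) := by
    rw [Finset.sum_add_distrib, Finset.sum_add_distrib, Finset.sum_sub_distrib, hABR, hκR, hγR]
    push_cast; ring
  have hAR : (∑ i, ((α i : ℕ) : ℝ)) = (A : ℝ) := by rw [← Nat.cast_sum, ← hA]
  have hBR : (∑ i, ((β i : ℕ) : ℝ)) = (B : ℝ) := by rw [← Nat.cast_sum, ← hB]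
  rw [hsub, hm1, hm3, hc1, hc3, hAR, hBR]
  clear_value m B A
  have hB1 : 2 ≤ B := by omega
  -- key factorial inequality
  have hkey : (m+1).factorial * (m+3).factorial
      ≤ m.factorial * m.factorial * ((m+1)^r * (m+3)^r) := by
    have e1 : (m+1).factorial = m.factorial * (m+1) := by
      rw [Nat.factorial_succ]; ring
    have e3 : (m+3).factorial = m.factorial * ((m+1)*(m+2)*(m+3)) := by
      show (m+2+1).factorial = _
      rw [Nat.factorial_succ, Nat.factorial_succ, Nat.factorial_succ]; ring
    rw [e1, e3]
    have h1 : (m+1)^2 ≤ (m+1)^r := Nat.pow_le_pow_right (by omega) (by omega)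
    have h2 : (m+3)^2 ≤ (m+3)^r := Nat.pow_le_pow_right (by omega) (by omega)
    have h3 : (m+2)*(m+3) ≤ (m+3)^2 := by nlinarith
    calc m.factorial * (m+1) * (m.factorial * ((m+1)*(m+2)*(m+3)))
        = m.factorial * m.factorial * ((m+1)^2 * ((m+2)*(m+3))) := by ring
      _ ≤ m.factorial * m.factorial * ((m+1)^r * (m+3)^r) := by
          exact Nat.mul_le_mul_left _ (Nat.mul_le_mul h1 (h3.trans h2))
  have hsqrt : Real.sqrt (((m+1).factorial * (m+3).factorial : ℝ) /
      (((m+1 : ℕ) : ℝ) ^ r * ((m+3 : ℕ) : ℝ) ^ r)) ≤ (m.factorial : ℝ) := by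
    have hden : (0:ℝ) < ((m+1 : ℕ) : ℝ) ^ r * ((m+3 : ℕ) : ℝ) ^ r := by positivity
    have hratio : ((m+1).factorial * (m+3).factorial : ℝ) /
        (((m+1 : ℕ) : ℝ) ^ r * ((m+3 : ℕ) : ℝ) ^ r) ≤ (m.factorial : ℝ)^2 := by
      rw [div_le_iff₀ hden]
      have := hkey
      have : ((m+1).factorial * (m+3).factorial : ℝ)
          ≤ (m.factorial : ℝ) * m.factorial * (((m+1:ℕ):ℝ)^r * ((m+3:ℕ):ℝ)^r) := by
        exact_mod_cast Nat.cast_le.mpr hkey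
      nlinarith
    calc Real.sqrt _ ≤ Real.sqrt ((m.factorial : ℝ)^2) := Real.sqrt_le_sqrt hratio
      _ = (m.factorial : ℝ) := Real.sqrt_sq (by positivity)
  have hBpos : (0:ℝ) < (B:ℝ) := by exact_mod_cast (by omega : 0 < B)
  have hfacB : (0:ℝ) < (B.factorial : ℝ) := by exact_mod_cast B.factorial_pos
  have hfacm : (0:ℝ) < (m.factorial : ℝ) := by exact_mod_cast m.factorial_pos
  have hstep : ((A:ℝ) ^ r / ((B.factorial : ℝ) * (m.factorial : ℝ))) *
      ((B.factorial : ℝ) / (B:ℝ) ^ (r+1)) *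
      Real.sqrt (((m+1).factorial * (m+3).factorial : ℝ) /
        (((m+1 : ℕ) : ℝ) ^ r * ((m+3 : ℕ) : ℝ) ^ r))
      ≤ ((A:ℝ) ^ r / ((B.factorial : ℝ) * (m.factorial : ℝ))) *
      ((B.factorial : ℝ) / (B:ℝ) ^ (r+1)) * (m.factorial : ℝ) := by
    apply mul_le_mul_of_nonneg_left hsqrt
    positivity
  refine hstep.trans ?_
  have heq : ((A:ℝ) ^ r / ((B.factorial : ℝ) * (m.factorial : ℝ))) *
      ((B.factorial : ℝ) / (B:ℝ) ^ (r+1)) * (m.factorial : ℝ)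
      = (A:ℝ) ^ r / (B:ℝ) ^ (r+1) := by
    field_simp
  rw [heq, div_le_iff₀ (by positivity)]
  have hAB : (A:ℝ) ≤ 2 * (B:ℝ) := by exact_mod_cast hA2B.le
  calc (A:ℝ)^r ≤ (2*(B:ℝ))^r := by
        exact pow_le_pow_left₀ (Nat.cast_nonneg A) hAB r
    _ = 2^r * (B:ℝ)^r := by rw [mul_pow]
    _ ≤ 2^r * (B:ℝ)^(r+1) := by
        have h1B : (1:ℝ) ≤ (B:ℝ) := by exact_mod_cast (by omega : 1 ≤ B)
        have := pow_le_pow_right₀ h1B (by omega : r ≤ r + 1)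
        exact mul_le_mul_of_nonneg_left this (by positivity)
end

section
/- Let r ≥ 3 and let m, l, i, j be natural numbers with i ≥ m + 2 and j ≥ l + 1. Then the quantity q := ((m+2+l)! · (i+j)^r · j! · (i−2)!) / ((m+2+l)^r · (i+j)! · l! · m!) satisfies q ≤ C(r) · (i + j − (m + 2 + l))^r for a constant C(r) depending only on r. -/
/-!
Write `k = m + 2 + l` and `n = i + j`. Splitting off binomial coefficients,
`k! / (l! m!) = C(k, l) · (m+2)(m+1)` and `n! / (j! (i-2)!) = C(n, j) · i(i-1)`,
and both factors on the left are dominated by those on the right, so the factorial part of `q`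
is at most `1`. What remains is `(n / k)^r`, and `n ≤ 2 k (n - k)` because `1 ≤ k < n`.
-/

open Nat

namespace Nat

theorem choose_add_le_choose_add {a b c d : ℕ} (hab : a ≤ b) (hcd : c ≤ d) :
    (a + c).choose c ≤ (b + d).choose d :=
  calc (a + c).choose c ≤ (b + c).choose c := choose_le_choose c (by omega)
    _ = (b + c).choose b := choose_symm_add.symm
    _ ≤ (b + d).choose b := choose_le_choose b (by omega)
    _ = (b + d).choose d := choose_symm_add

theorem factorial_mul_factorial_mul_factorial_le {m l i j s : ℕ} (hl : l ≤ j) (hm : m + s ≤ i) :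
    (m + s + l)! * j ! * (i - s)! ≤ (i + j)! * l ! * m ! := by
  have hms : m ! * (m + s).descFactorial s = (m + s)! := by
    simpa using factorial_mul_descFactorial (Nat.le_add_left s m)
  have hi : (i - s)! * i.descFactorial s = i ! := factorial_mul_descFactorial (by omega)
  rw [← add_choose_mul_factorial_mul_factorial (m + s) l, ← hms,
    ← add_choose_mul_factorial_mul_factorial i j, ← hi]
  calc (m + s + l).choose l * (m ! * (m + s).descFactorial s) * l ! * j ! * (i - s)!
      = (m + s + l).choose l * (m + s).descFactorial s * (m ! * l ! * j ! * (i - s)!) := by ring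
    _ ≤ (i + j).choose j * i.descFactorial s * (m ! * l ! * j ! * (i - s)!) := by
        gcongr
        exact choose_add_le_choose_add hm hl
    _ = (i + j).choose j * ((i - s)! * i.descFactorial s) * j ! * l ! * m ! := by ring

theorem le_two_mul_sub_mul {k n : ℕ} (hk : 1 ≤ k) (hkn : k < n) : n ≤ 2 * (n - k) * k := by
  obtain ⟨d, rfl⟩ := Nat.exists_eq_add_of_lt hkn
  rw [Nat.add_assoc, Nat.add_sub_cancel_left]
  nlinarith

end Nat

theorem stmt_10_general (r : ℕ) :
    ∃ C : ℝ, 0 < C ∧ ∀ m l i j : ℕ, m + 2 ≤ i → l + 1 ≤ j →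
      ((Nat.factorial (m + 2 + l) : ℝ) * (i + j : ℝ) ^ r *
          (Nat.factorial j : ℝ) * (Nat.factorial (i - 2) : ℝ)) /
        ((m + 2 + l : ℝ) ^ r * (Nat.factorial (i + j) : ℝ) *
          (Nat.factorial l : ℝ) * (Nat.factorial m : ℝ))
      ≤ C * ((i + j - (m + 2 + l) : ℕ) : ℝ) ^ r := by
  refine ⟨2 ^ r, by positivity, fun m l i j hi hj => ?_⟩
  have hfac : ((m + 2 + l)! * j ! * (i - 2)! : ℝ) ≤ (i + j)! * l ! * m ! := by
    exact_mod_cast factorial_mul_factorial_mul_factorial_le (by omega : l ≤ j) hi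
  have hpow : ((i + j : ℕ) : ℝ) ^ r ≤ 2 ^ r * ((i + j - (m + 2 + l) : ℕ) : ℝ) ^ r *
      ((m + 2 + l : ℕ) : ℝ) ^ r := by
    rw [← mul_pow, ← mul_pow]
    exact_mod_cast Nat.pow_le_pow_left (le_two_mul_sub_mul (by omega) (by omega)) r
  rw [div_le_iff₀ (by positivity)]
  push_cast at hpow
  calc ((m + 2 + l)! : ℝ) * (i + j : ℝ) ^ r * j ! * (i - 2)!
      = (i + j : ℝ) ^ r * ((m + 2 + l)! * j ! * (i - 2)!) := by ring
    _ ≤ 2 ^ r * ((i + j - (m + 2 + l) : ℕ) : ℝ) ^ r * (m + 2 + l : ℝ) ^ r *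
          ((i + j)! * l ! * m !) := by gcongr
    _ = _ := by ring

/-- The factorial coefficient bound `q` in the commutator estimate of the
pressure proof: for `r ≥ 3` there is `C(r) > 0` such that for all naturals
`m, l, i, j` with `i ≥ m + 2`, `j ≥ l + 1`,
`q = ((m+2+l)! (i+j)^r j! (i−2)!)/((m+2+l)^r (i+j)! l! m!)
   ≤ C(r) (i+j−(m+2+l))^r`. -/
theorem stmt_10 (r : ℕ) (hr : 3 ≤ r) :
    ∃ C : ℝ, 0 < C ∧ ∀ m l i j : ℕ, m + 2 ≤ i → l + 1 ≤ j →
      ((Nat.factorial (m + 2 + l) : ℝ) * (i + j : ℝ) ^ r *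
          (Nat.factorial j : ℝ) * (Nat.factorial (i - 2) : ℝ)) /
        ((m + 2 + l : ℝ) ^ r * (Nat.factorial (i + j) : ℝ) *
          (Nat.factorial l : ℝ) * (Nat.factorial m : ℝ))
      ≤ C * ((i + j - (m + 2 + l) : ℕ) : ℝ) ^ r :=
  stmt_10_general r
end
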